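/- There exists an absolute constant A > 0 such that the following holds: for every integer K ≥ 1, every integer j with 0 ≤ j ≤ K, every real w with 0 < w ≤ 1, and every real b with 0 < b ≤ 1 and 1 ≤ 2bK, one has | Ĩ_{C₉}(K,j;w,b) − Ĩ_{C₇}(K,j;w,b) | ≤ A · e^{−K}. -/

import Mathlib

/-- `Ĩ_{C₉}(K,j;w,b) = K^{-j} ∫_0^∞ t^j exp(−2πwt − 2πib t²) dt`. -/
noncomputable def ItC9 (K j : ℕ) (w b : ℝ) : ℂ :=
  ((K : ℂ) ^ j)⁻¹ * ∫ t in Set.Ioi (0 : ℝ), (t : ℂ) ^ j *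
    Complex.exp (-2 * (Real.pi : ℂ) * (w : ℂ) * (t : ℂ) -
      2 * (Real.pi : ℂ) * Complex.I * (b : ℂ) * (t : ℂ) ^ 2)

/-- `Ĩ_{C₇}(K,j;w,b)`: the contour integral of `z^j exp(−2πwz − 2πib z²)` along
the segment from `0` to `K−iK` at angle `−π/4`. -/
noncomputable def ItC7 (K j : ℕ) (w b : ℝ) : ℂ :=
  ((K : ℂ) ^ j)⁻¹ * Complex.exp (-(Complex.I) * (Real.pi : ℂ) * ((j : ℂ) + 1) / 4) *
    ∫ t in (0 : ℝ)..(Real.sqrt 2 * K), (t : ℂ) ^ j *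
      Complex.exp (-2 * (Real.pi : ℂ) * (w : ℂ) *
          Complex.exp (-(Complex.I) * (Real.pi : ℂ) / 4) * (t : ℂ) -
        2 * (Real.pi : ℂ) * (b : ℂ) * (t : ℂ) ^ 2)

/-! The integrand `z ^ j * exp (-2πwz - 2πibz²)` is entire, and on the closed sector
`-π/4 ≤ arg z ≤ 0` it is bounded by `|z| ^ j * exp (-√2 π w |z|)`. Cauchy's theorem for the
rectangle `[-x, x] × [-π/4, 0]` in the logarithmic coordinate `z = exp s` then shows that the
integrals along the two boundary rays agree, the two arcs vanishing as `x → ∞`. Hence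
`Ĩ_{C₉} - Ĩ_{C₇}` is the tail of the rotated integral beyond `|z| = √2 K`. There the Gaussian
factor satisfies `exp (-2πbt²) ≤ exp (-2t)` because `2bK ≥ 1`, while `(t / K) ^ j ≤ exp (t - K)`
because `j ≤ K`; so the tail is at most `e^{-K} ∫_{√2K}^∞ e^{-t} dt ≤ e^{-K}`. -/

open MeasureTheory Set Filter Topology Complex
open scoped Real

noncomputable def rayIntegrand (f : ℂ → ℂ) (θ t : ℝ) : ℂ :=
  cexp (θ * I) * f (cexp (θ * I) * t)

noncomputable def rayIntegral (f : ℂ → ℂ) (θ : ℝ) : ℂ :=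
  ∫ t in Ioi (0 : ℝ), rayIntegrand f θ t

section RayRotation

variable {f : ℂ → ℂ}

lemma norm_rayIntegrand (θ t : ℝ) :
    ‖rayIntegrand f θ t‖ = ‖f (cexp (θ * I) * t)‖ := by
  rw [rayIntegrand, norm_mul, norm_exp_ofReal_mul_I, one_mul]

lemma cexp_ofReal_add_mul_I (x y : ℝ) : cexp (x + y * I) = cexp (y * I) * (Real.exp x : ℂ) := by
  rw [Complex.exp_add, Complex.ofReal_exp, mul_comm]

lemma integral_logPolar_eq_rayIntegral (θ : ℝ) :
    ∫ x : ℝ, cexp (x + θ * I) * f (cexp (x + θ * I)) = rayIntegral f θ := by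
  rw [rayIntegral, ← Real.range_exp, ← image_univ, integral_image_eq_integral_abs_deriv_smul
    MeasurableSet.univ (fun x _ => (Real.hasDerivAt_exp x).hasDerivWithinAt)
    Real.exp_injective.injOn, Measure.restrict_univ]
  congr 1 with x
  rw [abs_of_pos (Real.exp_pos x), cexp_ofReal_add_mul_I, Complex.real_smul, rayIntegrand]
  ring

lemma integrable_logPolar_iff (θ : ℝ) :
    Integrable (fun x : ℝ => cexp (x + θ * I) * f (cexp (x + θ * I))) ↔
      IntegrableOn (rayIntegrand f θ) (Ioi 0) := by
  rw [← Real.range_exp, ← image_univ, integrableOn_image_iff_integrableOn_abs_deriv_smul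
    MeasurableSet.univ (fun x _ => (Real.hasDerivAt_exp x).hasDerivWithinAt)
    Real.exp_injective.injOn, integrableOn_univ]
  refine integrable_congr (Eventually.of_forall fun x => ?_)
  dsimp only
  rw [abs_of_pos (Real.exp_pos x), cexp_ofReal_add_mul_I, Complex.real_smul, rayIntegrand]
  ring

lemma integrableOn_rayIntegrand_of_norm_le (hf : Continuous f) {θ : ℝ} {g : ℝ → ℝ}
    (hg : IntegrableOn g (Ioi 0)) (hfg : ∀ r : ℝ, 0 < r → ‖f (cexp (θ * I) * r)‖ ≤ g r) :
    IntegrableOn (rayIntegrand f θ) (Ioi 0) := by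
  refine hg.mono' (by unfold rayIntegrand; fun_prop) ?_
  filter_upwards [ae_restrict_mem measurableSet_Ioi] with t ht
  rw [norm_rayIntegrand]
  exact hfg t ht

lemma norm_integral_logPolar_vertical_le {α β x C : ℝ}
    (hC : ∀ y ∈ uIcc α β, ‖f (cexp (y * I) * Real.exp x)‖ ≤ C) :
    ‖∫ y in α..β, cexp (x + y * I) * f (cexp (x + y * I))‖ ≤ Real.exp x * C * |β - α| := by
  refine intervalIntegral.norm_integral_le_of_norm_le_const fun y hy => ?_
  rw [cexp_ofReal_add_mul_I, norm_mul, norm_mul, norm_exp_ofReal_mul_I, Complex.norm_real,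
    Real.norm_of_nonneg (Real.exp_pos x).le, one_mul]
  exact mul_le_mul_of_nonneg_left (hC y (uIoc_subset_uIcc hy)) (Real.exp_pos x).le

theorem rayIntegral_eq_of_differentiable (hf : Differentiable ℂ f) {α β : ℝ} {g : ℝ → ℝ}
    (hg : IntegrableOn g (Ioi 0))
    (hfg : ∀ θ ∈ uIcc α β, ∀ r : ℝ, 0 < r → ‖f (cexp (θ * I) * r)‖ ≤ g r)
    (hg_decay : Tendsto (fun r => r * g r) atTop (𝓝 0)) :
    rayIntegral f α = rayIntegral f β := by
  set F : ℂ → ℂ := fun s => cexp s * f (cexp s)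
  have horizontal : ∀ θ ∈ uIcc α β,
      Tendsto (fun x : ℝ => ∫ u in -x..x, F (u + θ * I)) atTop (𝓝 (rayIntegral f θ)) := by
    intro θ hθ
    have hint : Integrable fun x : ℝ => F (x + θ * I) := (integrable_logPolar_iff θ).2
      (integrableOn_rayIntegrand_of_norm_le hf.continuous hg (hfg θ hθ))
    rw [← integral_logPolar_eq_rayIntegral]
    exact intervalIntegral_tendsto_integral hint tendsto_neg_atTop_atBot tendsto_id
  have top : Tendsto (fun x : ℝ => ∫ y in α..β, F (x + y * I)) atTop (𝓝 0) := by
    refine squeeze_zero_norm' ?_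
      (by simpa using (hg_decay.comp Real.tendsto_exp_atTop).mul_const |β - α|)
    exact Eventually.of_forall fun x => norm_integral_logPolar_vertical_le
      fun y hy => hfg y hy _ (Real.exp_pos x)
  have bottom : Tendsto (fun x : ℝ => ∫ y in α..β, F (↑(-x) + y * I)) atTop (𝓝 0) := by
    obtain ⟨C, hC⟩ := (isCompact_closedBall (0 : ℂ) 1).exists_bound_of_continuousOn
      hf.continuous.continuousOn
    have hlim : Tendsto (fun x : ℝ => Real.exp (-x) * C * |β - α|) atTop (𝓝 0) := by
      simpa using (Real.tendsto_exp_neg_atTop_nhds_zero.mul_const C).mul_const |β - α|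
    refine squeeze_zero_norm' ?_ hlim
    filter_upwards [eventually_ge_atTop 0] with x hx
    refine norm_integral_logPolar_vertical_le fun y _ => hC _ ?_
    rw [mem_closedBall_zero_iff, norm_mul, norm_exp_ofReal_mul_I, one_mul, Complex.norm_real,
      Real.norm_of_nonneg (Real.exp_pos _).le]
    exact Real.exp_le_one_iff.2 (by linarith)
  have rect : ∀ x : ℝ, (∫ u in -x..x, F (u + α * I)) - (∫ u in -x..x, F (u + β * I)) +
      I • (∫ y in α..β, F (x + y * I)) - I • (∫ y in α..β, F (↑(-x) + y * I)) = 0 := fun x =>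
    integral_boundary_rect_eq_zero_of_differentiableOn F ⟨-x, α⟩ ⟨x, β⟩
      (by fun_prop : Differentiable ℂ F).differentiableOn
  have hlim := (((horizontal α left_mem_uIcc).sub (horizontal β right_mem_uIcc)).add
    (top.const_smul I)).sub (bottom.const_smul I)
  rw [smul_zero, add_zero, sub_zero] at hlim
  exact sub_eq_zero.1 (tendsto_nhds_unique hlim (by simp only [rect]; exact tendsto_const_nhds))

end RayRotation

lemma integrableOn_pow_mul_exp_neg_mul (n : ℕ) {c : ℝ} (hc : 0 < c) :
    IntegrableOn (fun t : ℝ => t ^ n * Real.exp (-c * t)) (Ioi 0) := by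
  simpa [Real.rpow_natCast] using integrableOn_rpow_mul_exp_neg_mul_rpow (s := n) (p := 1)
    (by linarith [n.cast_nonneg (α := ℝ)]) one_pos hc

lemma pow_le_exp_mul_sub_one {x : ℝ} (hx : 1 ≤ x) {j n : ℕ} (hjn : j ≤ n) :
    x ^ j ≤ Real.exp (n * (x - 1)) :=
  calc x ^ j ≤ x ^ n := pow_le_pow_right₀ hx hjn
    _ ≤ Real.exp (x - 1) ^ n :=
      pow_le_pow_left₀ (by linarith) (by linarith [Real.add_one_le_exp (x - 1)]) n
    _ = Real.exp (n * (x - 1)) := by rw [← Real.exp_nat_mul]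

noncomputable def chirp (j : ℕ) (w b : ℝ) (z : ℂ) : ℂ :=
  z ^ j * cexp (-2 * π * w * z - 2 * π * I * b * z ^ 2)

section Chirp

variable (j : ℕ) {w b : ℝ}

lemma norm_chirp_cexp_mul_I (θ : ℝ) {t : ℝ} (ht : 0 ≤ t) :
    ‖chirp j w b (cexp (θ * I) * t)‖ =
      t ^ j * Real.exp (2 * π * b * t ^ 2 * Real.sin (2 * θ) - 2 * π * w * t * Real.cos θ) := by
  have hre : (-2 * π * w * (cexp (θ * I) * t) - 2 * π * I * b * (cexp (θ * I) * t) ^ 2).re =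
      2 * π * b * t ^ 2 * Real.sin (2 * θ) - 2 * π * w * t * Real.cos θ := by
    rw [Complex.exp_mul_I, ← Complex.ofReal_cos, ← Complex.ofReal_sin]
    simp only [pow_two, Complex.mul_re, Complex.mul_im, Complex.add_re, Complex.add_im,
      Complex.sub_re, Complex.ofReal_re, Complex.ofReal_im, Complex.I_re, Complex.I_im,
      Complex.neg_re, Complex.neg_im, Complex.re_ofNat, Complex.im_ofNat, Real.sin_two_mul]
    ring
  rw [chirp, norm_mul, norm_pow, norm_mul, norm_exp_ofReal_mul_I, Complex.norm_real,
    Real.norm_of_nonneg ht, one_mul, Complex.norm_exp, hre]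

lemma norm_chirp_cexp_mul_I_le (hw : 0 ≤ w) (hb : 0 ≤ b) {θ : ℝ} (hθ : θ ∈ Icc (-(π / 4)) 0)
    {t : ℝ} (ht : 0 ≤ t) :
    ‖chirp j w b (cexp (θ * I) * t)‖ ≤ t ^ j * Real.exp (-(√2 * π * w) * t) := by
  obtain ⟨hθ₁, hθ₂⟩ := hθ
  rw [norm_chirp_cexp_mul_I j θ ht]
  gcongr
  have hsin : Real.sin (2 * θ) ≤ 0 :=
    Real.sin_nonpos_of_nonpos_of_neg_pi_le (by linarith) (by linarith [Real.pi_pos])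
  have hcos : √2 / 2 ≤ Real.cos θ := by
    rw [← Real.cos_pi_div_four, ← Real.cos_neg θ]
    exact Real.cos_le_cos_of_nonneg_of_le_pi (by linarith) (by linarith [Real.pi_pos])
      (by linarith)
  have : 0 ≤ 2 * π * w * t := by positivity
  nlinarith [mul_nonpos_of_nonneg_of_nonpos (by positivity : 0 ≤ 2 * π * b * t ^ 2) hsin]

lemma rayIntegral_chirp_zero_eq (hw : 0 < w) (hb : 0 ≤ b) :
    rayIntegral (chirp j w b) 0 = rayIntegral (chirp j w b) (-(π / 4)) := by
  have hc : 0 < √2 * π * w := by positivity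
  refine rayIntegral_eq_of_differentiable (by unfold chirp; fun_prop)
    (g := fun t => t ^ j * Real.exp (-(√2 * π * w) * t)) (integrableOn_pow_mul_exp_neg_mul j hc)
    (fun θ hθ r hr => ?_) ?_
  · rw [uIcc_of_ge (by linarith [Real.pi_pos])] at hθ
    exact norm_chirp_cexp_mul_I_le j hw.le hb hθ hr.le
  · refine (tendsto_rpow_mul_exp_neg_mul_atTop_nhds_zero (j + 1) _ hc).congr fun t => ?_
    rw [← Nat.cast_add_one, Real.rpow_natCast, pow_succ]
    ring

lemma rayIntegrand_chirp_neg_pi_div_four (t : ℝ) :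
    rayIntegrand (chirp j w b) (-(π / 4)) t =
      cexp (-I * π * ((j : ℂ) + 1) / 4) *
        ((t : ℂ) ^ j * cexp (-2 * π * w * cexp (-I * π / 4) * t - 2 * π * b * (t : ℂ) ^ 2)) := by
  have hζ : cexp (((-(π / 4) : ℝ) : ℂ) * I) = cexp (-I * π / 4) := by push_cast; ring_nf
  have hpow : cexp (-I * π * ((j : ℂ) + 1) / 4) = cexp (-I * π / 4) * cexp (-I * π / 4) ^ j := by
    rw [← Complex.exp_nat_mul, ← Complex.exp_add]; ring_nf
  have hsq : cexp (-I * π / 4) ^ 2 = -I := by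
    rw [← Complex.exp_nat_mul, show ((2 : ℕ) : ℂ) * (-I * π / 4) = -(π / 2 * I) by push_cast; ring,
      Complex.exp_neg, Complex.exp_pi_div_two_mul_I, Complex.inv_I]
  rw [rayIntegrand, hζ]
  set ζ := cexp (-I * π / 4)
  have harg : -2 * π * w * (ζ * t) - 2 * π * I * b * (ζ * t) ^ 2 =
      -2 * π * w * ζ * t - 2 * π * b * (t : ℂ) ^ 2 := by
    linear_combination (-2 * π * b * (t : ℂ) ^ 2 * I) * hsq + (2 * π * b * (t : ℂ) ^ 2) * I_sq
  rw [chirp, harg, hpow, mul_pow]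
  ring

lemma norm_rayIntegrand_chirp_neg_pi_div_four_le {K : ℕ} (hj : j ≤ K) (hw : 0 ≤ w)
    (hbK : 1 ≤ 2 * b * K) {t : ℝ} (ht : K ≤ t) :
    ((K : ℝ) ^ j)⁻¹ * ‖rayIntegrand (chirp j w b) (-(π / 4)) t‖ ≤
      Real.exp (-K) * Real.exp (-t) := by
  have h2bK : 0 < 2 * b * K := by linarith
  have hb2 : 0 < 2 * b := pos_of_mul_pos_left h2bK K.cast_nonneg
  have hK : (0 : ℝ) < K := pos_of_mul_pos_right h2bK hb2.le
  have hb : 0 ≤ b := by linarith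
  have ht0 : 0 ≤ t := hK.le.trans ht
  have hgauss : 2 * t ≤ 2 * π * b * t ^ 2 := by
    have : π * t ≤ π * t * (2 * b * K) := le_mul_of_one_le_right (by positivity) hbK
    nlinarith [Real.pi_gt_three, mul_le_mul_of_nonneg_left ht (by positivity : 0 ≤ 2 * π * b * t)]
  have hpow : ((K : ℝ) ^ j)⁻¹ * t ^ j ≤ Real.exp (t - K) := by
    rw [← inv_pow, ← mul_pow, inv_mul_eq_div]
    convert pow_le_exp_mul_sub_one ((one_le_div hK).2 ht) hj using 2
    field_simp
  rw [norm_rayIntegrand, norm_chirp_cexp_mul_I j _ ht0, show 2 * -(π / 4) = -(π / 2) by ring,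
    Real.sin_neg, Real.sin_pi_div_two, Real.cos_neg, Real.cos_pi_div_four, ← mul_assoc]
  calc ((K : ℝ) ^ j)⁻¹ * t ^ j * Real.exp (2 * π * b * t ^ 2 * -1 - 2 * π * w * t * (√2 / 2))
      ≤ Real.exp (t - K) * Real.exp (-(2 * t)) := by
        gcongr
        nlinarith [(by positivity : 0 ≤ 2 * π * w * t * (√2 / 2))]
    _ = Real.exp (-K) * Real.exp (-t) := by rw [← Real.exp_add, ← Real.exp_add]; ring_nf

lemma norm_integral_Ioi_rayIntegrand_chirp_le {K : ℕ} (hj : j ≤ K) (hw : 0 ≤ w)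
    (hbK : 1 ≤ 2 * b * K) {s : ℝ} (hs : K ≤ s) :
    ‖((K : ℂ) ^ j)⁻¹ * ∫ t in Ioi s, rayIntegrand (chirp j w b) (-(π / 4)) t‖ ≤
      Real.exp (-K) := by
  rw [← integral_const_mul]
  calc _ ≤ ∫ t in Ioi s, Real.exp (-K) * Real.exp (-t) := by
        refine norm_integral_le_of_norm_le ((integrableOn_exp_neg_Ioi s).const_mul _) ?_
        filter_upwards [ae_restrict_mem measurableSet_Ioi] with t ht
        rw [norm_mul, norm_inv, norm_pow, Complex.norm_natCast]
        exact norm_rayIntegrand_chirp_neg_pi_div_four_le j hj hw hbK (hs.trans ht.le)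
    _ = Real.exp (-K) * Real.exp (-s) := by rw [integral_const_mul, integral_exp_neg_Ioi]
    _ ≤ Real.exp (-K) :=
        mul_le_of_le_one_right (Real.exp_pos _).le
          (Real.exp_le_one_iff.2 (by linarith [K.cast_nonneg (α := ℝ)]))

end Chirp

/-- Rotating the contour from the positive real axis to the ray at angle `−π/4`
and truncating at `K−iK` costs at most `A·e^{−K}`, uniformly. -/
theorem ItC9_approx_ItC7 :
    ∃ A > (0 : ℝ), ∀ K : ℕ, 1 ≤ K → ∀ j : ℕ, j ≤ K →
      ∀ w : ℝ, 0 < w → w ≤ 1 → ∀ b : ℝ, 0 < b → b ≤ 1 → 1 ≤ 2 * b * K →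
        ‖ItC9 K j w b - ItC7 K j w b‖ ≤ A * Real.exp (-(K : ℝ)) := by
  refine ⟨1, one_pos, fun K _ j hj w hw _ b hb _ hbK => ?_⟩
  set h := rayIntegrand (chirp j w b) (-(π / 4))
  have hint : IntegrableOn h (Ioi 0) :=
    integrableOn_rayIntegrand_of_norm_le (by unfold chirp; fun_prop)
      (integrableOn_pow_mul_exp_neg_mul j (by positivity : 0 < √2 * π * w))
      fun r hr => norm_chirp_cexp_mul_I_le j hw.le hb.le ⟨le_rfl, by linarith [Real.pi_pos]⟩ hr.le
  have h9 : ItC9 K j w b = ((K : ℂ) ^ j)⁻¹ * rayIntegral (chirp j w b) 0 := by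
    simp [ItC9, rayIntegral, rayIntegrand, chirp]
  have h7 : ItC7 K j w b = ((K : ℂ) ^ j)⁻¹ * ∫ t in (0 : ℝ)..√2 * K, h t := by
    simp only [ItC7, h, rayIntegrand_chirp_neg_pi_div_four, intervalIntegral.integral_const_mul,
      mul_assoc]
  have hsplit : rayIntegral (chirp j w b) (-(π / 4)) =
      (∫ t in (0 : ℝ)..√2 * K, h t) + ∫ t in Ioi (√2 * K), h t :=
    (intervalIntegral.integral_interval_add_Ioi hint
      (hint.mono_set (Ioi_subset_Ioi (by positivity)))).symm
  calc ‖ItC9 K j w b - ItC7 K j w b‖ = ‖((K : ℂ) ^ j)⁻¹ * ∫ t in Ioi (√2 * K), h t‖ := by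
        rw [h9, h7, rayIntegral_chirp_zero_eq j hw hb.le, hsplit]; ring_nf
    _ ≤ 1 * Real.exp (-K) := by
        rw [one_mul]
        exact norm_integral_Ioi_rayIntegrand_chirp_le j hj hw.le hbK
          (le_mul_of_one_le_left K.cast_nonneg Real.one_lt_sqrt_two.le)
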